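/- arXiv:2108.12797 — 5 statements merged into one kernel-verified Lean document; each statement's English description precedes it below -/
import Mathlib

section
/- Let m ≥ 1 and let t, j be integers with 0 ≤ j < t ≤ m-1. For n ≥ 0 let a_n denote the number of Deutsch paths of length n from height t to height j all of whose heights h_i satisfy 0 ≤ h_i ≤ m-1. Then in the formal power series ring ℤ[[v]], the series S = Σ_{n≥0} a_n · vⁿ · ((1+v+v²)⁻¹)ⁿ (which converges since the n-th summand has order ≥ n) satisfies S · (1-v) · (1-v^{m+2}) · (1+v)^{j+2} = (1+v)^{t} · (1-v^{j+1}) · v · (1-v^{m-t}) · (1+v+v²). -/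
/-!
Let `F_h` be the series of strip paths from `t` ending at height `h`, and `T_h = ∑_{c ≥ h} F_c`.
A path reaches `h` either from `h - 1` or from some height above `h`, so with `w = v/(1+v+v²)`
the last-step decomposition becomes `(1+v)² (T_h - T_{h+1}) = v T_{h-1} + [h = t] (1+v+v²)`,
with `T_{-1} = T_0` and `T_m = 0`. The characteristic roots are `1/(1+v)` and `v/(1+v)`, so
`(1+v)^h T_h` is a combination of `1` and `v^h` below and above `t`. The floor fixes the
combination below `t`, the ceiling the one above, and the jump at `t` then determines `T_0`;
finally `F_j = T_j - T_{j+1}`.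
-/

open PowerSeries Finset

/-- The power series `1 + v + v²` over `ℤ`. -/
noncomputable def q : PowerSeries ℤ := 1 + X + X ^ 2

/-- `v · (1+v+v²)⁻¹` as a formal power series over `ℤ`. -/
noncomputable def w : PowerSeries ℤ := X * PowerSeries.invOfUnit q 1

/-- `p` is a Deutsch path of length `n`: each step is either an up-step `+1`
or a down-step of arbitrary (negative) size. -/
def IsDeutschPath (n : ℕ) (p : Fin (n + 1) → ℤ) : Prop :=
  ∀ i : Fin n, p i.succ - p i.castSucc = 1 ∨ p i.succ - p i.castSucc ≤ -1

/-- Number of Deutsch paths of length `n` from height `a` to height `b`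
all of whose heights satisfy the predicate `P`. -/
noncomputable def pathCount (n : ℕ) (a b : ℤ) (P : ℤ → Prop) : ℕ :=
  Nat.card {p : Fin (n + 1) → ℤ //
    p 0 = a ∧ p (Fin.last n) = b ∧ (∀ i, P (p i)) ∧ IsDeutschPath n p}

/-- The power series `Σ_{n≥0} a_n · vⁿ · ((1+v+v²)⁻¹)ⁿ`.  Since the `n`-th
summand has order `≥ n`, its coefficient of `v^N` is the (finite) sum of the
corresponding coefficients of the summands with `n ≤ N`. -/
noncomputable def series (a : ℕ → ℕ) : PowerSeries ℤ :=
  PowerSeries.mk fun N => ∑ n ∈ range (N + 1), (a n : ℤ) * coeff N (w ^ n)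

theorem w_mul_q : w * q = X := by
  rw [w, mul_assoc, mul_comm _ q, mul_invOfUnit q 1 (by simp [q]), mul_one]

theorem hasSubst_w : HasSubst w :=
  HasSubst.of_constantCoeff_zero' (by simp [w])

theorem coeff_w_pow_of_lt {N n : ℕ} (h : N < n) : coeff N (w ^ n) = 0 := by
  rw [w, mul_pow, coeff_X_pow_mul', if_neg (by omega)]

theorem series_eq_subst (a : ℕ → ℕ) : series a = (mk fun n => (a n : ℤ)).subst w := by
  ext N
  rw [coeff_subst' hasSubst_w, finsum_eq_sum_of_support_subset (s := range (N + 1))]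
  · simp [series]
  · intro n hn
    by_contra h
    rw [mem_coe, mem_range, not_lt] at h
    exact hn (by simp [coeff_w_pow_of_lt (Nat.lt_of_succ_le h)])

theorem series_sum {ι : Type*} (s : Finset ι) (a : ι → ℕ → ℕ) :
    series (fun n => ∑ i ∈ s, a i n) = ∑ i ∈ s, series (a i) := by
  simp only [series_eq_subst, ← coe_substAlgHom hasSubst_w, ← map_sum]
  congr 1
  ext N
  simp

theorem q_mul_series (a : ℕ → ℕ) :
    q * series a = C (a 0 : ℤ) * q + X * series fun n => a (n + 1) := by
  rw [series_eq_subst, eq_X_mul_shift_add_const (mk _)]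
  rw [subst_add hasSubst_w, subst_mul hasSubst_w, subst_X hasSubst_w, subst_C]
  simp only [coeff_mk, ← series_eq_subst]
  change q * (w * _ + C ((a 0 : ℕ) : ℤ)) = _
  linear_combination series (fun n => a (n + 1)) * w_mul_q

theorem Nat.card_eq_sum_card_fiber {α ι : Type*} (f : α → ι) (s : Finset ι)
    (hs : ∀ x, f x ∈ s) [∀ i, Finite {x // f x = i}] :
    Nat.card α = ∑ i ∈ s, Nat.card {x // f x = i} := by
  let g : α → s := fun x => ⟨f x, hs x⟩
  have hg (i : s) : {x // g x = i} ≃ {x // f x = i} :=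
    Equiv.subtypeEquivRight fun _ => Subtype.ext_iff
  have (i : s) : Finite {x // g x = i} := .of_equiv _ (hg i).symm
  rw [Nat.card_congr (Equiv.sigmaFiberEquiv g).symm, Nat.card_sigma, ← sum_coe_sort s]
  exact sum_congr rfl fun i _ => Nat.card_congr (hg i)

section Paths

variable {n : ℕ} {a b : ℤ} {P : ℤ → Prop}

def IsDeutschPathIn (n : ℕ) (a b : ℤ) (P : ℤ → Prop) (p : Fin (n + 1) → ℤ) : Prop :=
  p 0 = a ∧ p (Fin.last n) = b ∧ (∀ i, P (p i)) ∧ IsDeutschPath n p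

theorem pathCount_eq_card : pathCount n a b P = Nat.card {p // IsDeutschPathIn n a b P p} := rfl

theorem isDeutschPath_snoc {p : Fin (n + 1) → ℤ} {y : ℤ} :
    IsDeutschPath (n + 1) (Fin.snoc p y) ↔
      IsDeutschPath n p ∧ (y - p (Fin.last n) = 1 ∨ y - p (Fin.last n) ≤ -1) := by
  simp only [IsDeutschPath, Fin.forall_fin_succ', Fin.succ_castSucc, Fin.snoc_castSucc,
    Fin.succ_last, Fin.snoc_last]

theorem isDeutschPathIn_snoc {p : Fin (n + 1) → ℤ} {y : ℤ} :
    IsDeutschPathIn (n + 1) a b P (Fin.snoc p y) ↔ y = b ∧ P y ∧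
      IsDeutschPathIn n a (p (Fin.last n)) P p ∧
        (y - p (Fin.last n) = 1 ∨ y - p (Fin.last n) ≤ -1) := by
  simp only [IsDeutschPathIn, isDeutschPath_snoc, Fin.forall_fin_succ', Fin.snoc_castSucc,
    Fin.snoc_last, Fin.snoc_apply_zero]
  tauto

theorem finite_isDeutschPathIn (s : Finset ℤ) (hs : ∀ x, P x → x ∈ s) :
    Finite {p // IsDeutschPathIn n a b P p} :=
  Finite.of_injective (fun p i => (⟨p.1 i, hs _ (p.2.2.2.1 i)⟩ : s)) fun _ _ h =>
    Subtype.ext (funext fun i => congrArg Subtype.val (congrFun h i))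

theorem pathCount_zero [Decidable (a = b ∧ P a)] :
    pathCount 0 a b P = if a = b ∧ P a then 1 else 0 := by
  rw [pathCount_eq_card]
  split_ifs with h
  · obtain ⟨rfl, ha⟩ := h
    refine Nat.card_eq_one_iff_exists.2
      ⟨⟨fun _ => a, rfl, rfl, fun _ => ha, Fin.elim0⟩,
        fun p => Subtype.ext (funext fun i => ?_)⟩
    rw [Fin.fin_one_eq_zero i]
    exact p.2.1
  · have : IsEmpty {p // IsDeutschPathIn 0 a b P p} :=
      ⟨fun ⟨p, h0, hb, hP, _⟩ => h ⟨h0.symm.trans hb, h0 ▸ hP 0⟩⟩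
    exact Nat.card_of_isEmpty

def lastStepFiberEquiv {c : ℤ} (hb : P b) (hcb : b - c = 1 ∨ b - c ≤ -1) :
    {p : {p // IsDeutschPathIn (n + 1) a b P p} // p.1 (Fin.last n).castSucc = c} ≃
      {p // IsDeutschPathIn n a c P p} where
  toFun p := ⟨Fin.init p.1.1, by
    obtain ⟨⟨p, hp⟩, rfl⟩ := p
    rw [← Fin.snoc_init_self p, isDeutschPathIn_snoc] at hp
    exact hp.2.2.1⟩
  invFun p := ⟨⟨Fin.snoc p.1 b, by
    rw [isDeutschPathIn_snoc, p.2.2.1]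
    exact ⟨rfl, hb, p.2, hcb⟩⟩, by simp [p.2.2.1]⟩
  left_inv p :=
    Subtype.ext (Subtype.ext (by simpa [p.1.2.2.1] using Fin.snoc_init_self p.1.1))
  right_inv p := Subtype.ext (Fin.init_snoc (α := fun _ => ℤ) _ _)

theorem pathCount_succ (s : Finset ℤ) (hs : ∀ x, P x → x ∈ s) (hb : P b) :
    pathCount (n + 1) a b P = ∑ c ∈ s with b - c = 1 ∨ b - c ≤ -1, pathCount n a c P := by
  have := finite_isDeutschPathIn (n := n + 1) (a := a) (b := b) s hs
  have hlast (p : {p // IsDeutschPathIn (n + 1) a b P p}) :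
      p.1 (Fin.last n).castSucc ∈ s.filter fun c => b - c = 1 ∨ b - c ≤ -1 := by
    obtain ⟨p, -, hpb, hP, hD⟩ := p
    have := hD (Fin.last n)
    rw [Fin.succ_last, hpb] at this
    exact mem_filter.2 ⟨hs _ (hP _), this⟩
  rw [pathCount_eq_card, Nat.card_eq_sum_card_fiber _ _ hlast]
  exact sum_congr rfl fun c hc => Nat.card_congr (lastStepFiberEquiv hb (mem_filter.1 hc).2)

end Paths

/-- At `h = 0` the term `T (h - 1)` is `T 0`: truncated subtraction encodes the floor. -/
def IsTailRecurrence {R : Type*} [CommRing R] (x c : R) (m t : ℕ) (T : ℕ → R) : Prop :=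
  ∀ h < m, (1 + x) ^ 2 * (T h - T (h + 1)) = x * T (h - 1) + if h = t then c else 0

namespace IsTailRecurrence

variable {R : Type*} [CommRing R] {x c : R} {m t : ℕ} {T : ℕ → R}

theorem pow_mul_succ_of_lt (hT : IsTailRecurrence x c m t T) (htm : t ≤ m)
    {h : ℕ} (hh : h < t) :
    (1 + x) ^ (h + 2) * T (h + 1) = (1 + x) ^ (h + 1) * T h + x ^ (h + 2) * T 0 := by
  induction h with
  | zero =>
    have h0 := hT 0 (by omega)
    rw [if_neg (by omega)] at h0
    linear_combination -h0
  | succ h ih =>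
    have hh1 := hT (h + 1) (by omega)
    rw [if_neg (by omega), Nat.add_sub_cancel] at hh1
    linear_combination x * ih (by omega) - (1 + x) ^ (h + 1) * hh1

theorem closedForm_of_le (hT : IsTailRecurrence x c m t T) (htm : t ≤ m)
    {h : ℕ} (hh : h ≤ t) :
    (1 + x) ^ h * (1 - x ^ 2) * T h = (1 - x ^ (h + 2)) * T 0 := by
  induction h with
  | zero => ring
  | succ h ih =>
    linear_combination ih (by omega) + (1 - x) * hT.pow_mul_succ_of_lt htm (h := h) (by omega)

theorem sub_succ_of_lt (hT : IsTailRecurrence x c m t T) (htm : t ≤ m)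
    {h : ℕ} (hh : h < t) :
    (1 - x) * (1 + x) ^ (h + 2) * (T h - T (h + 1)) = x * (1 - x ^ (h + 1)) * T 0 := by
  linear_combination x * hT.closedForm_of_le htm hh.le - (1 - x) * hT.pow_mul_succ_of_lt htm hh

variable [IsDomain R]

theorem ratio_of_le (hT : IsTailRecurrence x c m t T) (hx : x ≠ 0) (hm : T m = 0) {h : ℕ}
    (hth : t ≤ h) (hhm : h < m) :
    (1 + x) * (x ^ h - x ^ m) * T (h + 1) = (x ^ (h + 1) - x ^ m) * T h := by
  obtain ⟨d, hd⟩ := Nat.exists_eq_add_of_lt hhm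
  induction d generalizing h with
  | zero =>
    rw [hd] at hm ⊢
    rw [hm]
    ring
  | succ d ih =>
    have hh1 := hT (h + 1) (by omega)
    rw [if_neg (by omega), Nat.add_sub_cancel] at hh1
    apply mul_left_cancel₀ hx
    linear_combination (1 + x) * ih (h := h + 1) (by omega) (by omega) (by omega) +
      (x ^ (h + 1) - x ^ m) * hh1

theorem zero_eq (hT : IsTailRecurrence x c m t T) (hx : x ≠ 0) (hx1 : x ≠ 1) (hm : T m = 0)
    (ht : 0 < t) (htm : t < m) :
    (1 - x ^ (m + 2)) * T 0 = c * (1 - x ^ (m - t)) * (1 + x) ^ t := by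
  obtain ⟨s, rfl⟩ : ∃ s, t = s + 1 := ⟨t - 1, by omega⟩
  obtain ⟨k, rfl⟩ : ∃ k, m = s + 1 + (k + 1) := ⟨m - (s + 1) - 1, by omega⟩
  have hjump := hT (s + 1) (by omega)
  rw [if_pos rfl, Nat.add_sub_cancel] at hjump
  have hstep := hT.pow_mul_succ_of_lt htm.le (h := s) (by omega)
  have hbelow := hT.closedForm_of_le htm.le (h := s + 1) le_rfl
  have habove := hT.ratio_of_le hx hm (h := s + 1) le_rfl htm
  apply mul_left_cancel₀ (mul_ne_zero (pow_ne_zero (s + 1) hx) (sub_ne_zero.2 hx1.symm))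
  rw [Nat.add_sub_cancel_left]
  linear_combination
    (1 - x) * (x ^ (s + 1) - x ^ (s + 1 + (k + 1))) * (1 + x) ^ (s + 1) * hjump -
      (1 - x) * (x ^ (s + 1) - x ^ (s + 1 + (k + 1))) * x * hstep -
      x ^ (s + 1) * (1 - x) * hbelow + (1 - x) * (1 + x) ^ (s + 2) * habove

end IsTailRecurrence

section Strip

variable (m t : ℕ)

noncomputable def stripSeries (h : ℕ) : PowerSeries ℤ :=
  series fun n => pathCount n t h fun x => 0 ≤ x ∧ x ≤ (m : ℤ) - 1

noncomputable def stripTail (h : ℕ) : PowerSeries ℤ :=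
  ∑ c ∈ Ico h m, stripSeries m t c

variable {m t}

theorem stripTail_eq_add {h : ℕ} (hh : h < m) :
    stripTail m t h = stripSeries m t h + stripTail m t (h + 1) :=
  sum_eq_sum_Ico_succ_bot hh _

theorem q_mul_stripSeries {h : ℕ} (hh : h < m) :
    q * stripSeries m t h =
      (if h = t then q else 0) + X * (stripTail m t (h - 1) - stripSeries m t h) := by
  have hs (x : ℤ) (hx : 0 ≤ x ∧ x ≤ (m : ℤ) - 1) :
      x ∈ (range m).map Nat.castEmbedding :=
    mem_map.2 ⟨x.toNat, mem_range.2 (by omega), by simp [hx.1]⟩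
  -- Also right at `h = 0`, since `0 - 1 = 0` in `ℕ`.
  have hpred : (range m).filter (fun c : ℕ => (h : ℤ) - c = 1 ∨ (h : ℤ) - c ≤ -1) =
      (Ico (h - 1) m).erase h := by
    ext c
    simp only [mem_filter, mem_range, mem_erase, mem_Ico]
    omega
  simp_rw [stripSeries, q_mul_series, pathCount_zero,
    pathCount_succ _ hs (show 0 ≤ (h : ℤ) ∧ (h : ℤ) ≤ m - 1 by omega), series_sum,
    filter_map, sum_map, Function.comp_def, Nat.castEmbedding_apply, hpred,
    sum_erase_eq_sub (mem_Ico.2 ⟨Nat.sub_le h 1, hh⟩)]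
  have hstart : ((t : ℤ) = h ∧ 0 ≤ (t : ℤ) ∧ (t : ℤ) ≤ m - 1) ↔ h = t := by omega
  simp only [hstart]
  congr 1
  split_ifs <;> simp

theorem isTailRecurrence_stripTail : IsTailRecurrence X q m t (stripTail m t) := by
  intro h hh
  have hq : q = 1 + X + X ^ 2 := rfl
  rw [stripTail_eq_add hh]
  linear_combination q_mul_stripSeries hh - stripSeries m t h * hq

end Strip

theorem stmt0_general (m t j : ℕ) (hjt : j < t) (htm : t ≤ m - 1) :
    (series fun n => pathCount n t j (fun x => 0 ≤ x ∧ x ≤ (m : ℤ) - 1)) *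
        (1 - X) * (1 - X ^ (m + 2)) * (1 + X) ^ (j + 2) =
      (1 + X) ^ t * (1 - X ^ (j + 1)) * X * (1 - X ^ (m - t)) * q := by
  have htm' : t < m := by omega
  have hX1 : (X : PowerSeries ℤ) ≠ 1 := fun h => by simpa using congrArg constantCoeff h
  have hT := isTailRecurrence_stripTail (m := m) (t := t)
  have hT0 := hT.zero_eq X_ne_zero hX1 (by simp [stripTail]) (by omega) htm'
  have hFj := hT.sub_succ_of_lt htm'.le hjt
  change stripSeries m t j * _ * _ * _ = _
  rw [stripTail_eq_add (t := t) (show j < m by omega)] at hFj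
  linear_combination (1 - X ^ (m + 2)) * hFj + X * (1 - X ^ (j + 1)) * hT0

theorem stmt0 (m t j : ℕ) (hm : 1 ≤ m) (hjt : j < t) (htm : t ≤ m - 1) :
    (series fun n => pathCount n t j (fun x => 0 ≤ x ∧ x ≤ (m : ℤ) - 1)) *
        (1 - X) * (1 - X ^ (m + 2)) * (1 + X) ^ (j + 2) =
      (1 + X) ^ t * (1 - X ^ (j + 1)) * X * (1 - X ^ (m - t)) * q :=
  stmt0_general m t j hjt htm
end

section
/- Let K = ℚ(v) be the field of rational functions over ℚ and set z = v/(1+v+v²) in K. For m ≥ 1 let M_m be the m×m matrix over K with (0-indexed) entries M_{ij} = 1 if i = j, M_{ij} = -z if j = i-1 or j > i, and M_{ij} = 0 if j < i-1, and let D_m = det M_m. Then D_m · (1+v+v²)^m · (1-v) = (1+v)^{m-1} · (1-v^{m+2}). -/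
open Finset

/-- The variable `v` in the field of rational functions `ℚ(v)`. -/
noncomputable def v : RatFunc ℚ := RatFunc.X

/-- `z = v / (1 + v + v²)` in `ℚ(v)`. -/
noncomputable def z : RatFunc ℚ := v / (1 + v + v ^ 2)

/-- The `m × m` matrix with `1` on the diagonal, `-z` on the subdiagonal and
everywhere strictly above the diagonal, and `0` below the subdiagonal. -/
noncomputable def M (m : ℕ) : Matrix (Fin m) (Fin m) (RatFunc ℚ) :=
  fun i j =>
    if (i : ℕ) = (j : ℕ) then 1
    else if (j : ℕ) + 1 = (i : ℕ) ∨ (i : ℕ) < (j : ℕ) then -z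
    else 0

/-- `D m` is the determinant of `M m`. -/
noncomputable def D (m : ℕ) : RatFunc ℚ := (M m).det

/-- Auxiliary matrix: `M m` with row `0` replaced by the all-`(-z)` row. -/
noncomputable def Bm (m : ℕ) : Matrix (Fin m) (Fin m) (RatFunc ℚ) :=
  fun i j => if (i : ℕ) = 0 then -z else M m i j

lemma coe_succAbove_one (k : ℕ) (i : Fin (k+1)) :
    (((1 : Fin (k+2)).succAbove i : Fin (k+2)) : ℕ) = if (i:ℕ) = 0 then 0 else (i:ℕ)+1 := by
  rcases i with ⟨i, hi⟩
  simp [Fin.succAbove, Fin.lt_def]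
  split_ifs <;> simp_all

lemma subM0 (k : ℕ) : (M (k+2)).submatrix ((0 : Fin (k+2)).succAbove) Fin.succ = M (k+1) := by
  ext i j
  simp only [Matrix.submatrix_apply, Fin.succAbove_zero, M, Fin.val_succ]
  have hi := i.isLt; have hj := j.isLt
  split_ifs <;> first | rfl | omega | simp_all

lemma subM1 (k : ℕ) : (M (k+2)).submatrix ((1 : Fin (k+2)).succAbove) Fin.succ = Bm (k+1) := by
  ext i j
  simp only [Matrix.submatrix_apply, M, Bm, Fin.val_succ, coe_succAbove_one]
  have hi := i.isLt; have hj := j.isLt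
  split_ifs <;> first | rfl | omega | simp_all

lemma subB0 (k : ℕ) : (Bm (k+2)).submatrix ((0 : Fin (k+2)).succAbove) Fin.succ = M (k+1) := by
  ext i j
  simp only [Matrix.submatrix_apply, Fin.succAbove_zero, M, Bm, Fin.val_succ]
  have hi := i.isLt; have hj := j.isLt
  split_ifs <;> first | rfl | omega | simp_all

lemma subB1 (k : ℕ) : (Bm (k+2)).submatrix ((1 : Fin (k+2)).succAbove) Fin.succ = Bm (k+1) := by
  ext i j
  simp only [Matrix.submatrix_apply, M, Bm, Fin.val_succ, coe_succAbove_one]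
  have hi := i.isLt; have hj := j.isLt
  split_ifs <;> first | rfl | omega | simp_all

lemma recD (k : ℕ) : (M (k+2)).det = (M (k+1)).det + z * (Bm (k+1)).det := by
  rw [Matrix.det_succ_column_zero (M (k+2)), Fin.sum_univ_succ, Fin.sum_univ_succ,
    Fin.succ_zero_eq_one, subM0, subM1]
  have h0 : M (k+2) 0 0 = 1 := by norm_num [M]
  have h1 : M (k+2) 1 0 = -z := by norm_num [M]
  have hs : ∀ i : Fin k, M (k+2) i.succ.succ 0 = 0 := by
    intro i; simp only [M, Fin.val_succ, Fin.val_zero]; norm_num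
  rw [h0, h1, Finset.sum_eq_zero (fun i _ => by rw [hs i]; ring)]
  norm_num

lemma recN (k : ℕ) : (Bm (k+2)).det = -z * (M (k+1)).det + z * (Bm (k+1)).det := by
  rw [Matrix.det_succ_column_zero (Bm (k+2)), Fin.sum_univ_succ, Fin.sum_univ_succ,
    Fin.succ_zero_eq_one, subB0, subB1]
  have h0 : Bm (k+2) 0 0 = -z := by norm_num [Bm]
  have h1 : Bm (k+2) 1 0 = -z := by norm_num [Bm, M]
  have hs : ∀ i : Fin k, Bm (k+2) i.succ.succ 0 = 0 := by
    intro i; simp only [Bm, M, Fin.val_succ, Fin.val_zero]; norm_num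
  rw [h0, h1, Finset.sum_eq_zero (fun i _ => by rw [hs i]; ring)]
  norm_num

lemma hq : (1 + v + v ^ 2 : RatFunc ℚ) ≠ 0 := by
  have h1 : (1 + v + v ^ 2 : RatFunc ℚ)
      = algebraMap (Polynomial ℚ) (RatFunc ℚ) (1 + Polynomial.X + Polynomial.X ^ 2) := by
    simp [v, map_add, map_pow, RatFunc.algebraMap_X]
  rw [h1]
  apply RatFunc.algebraMap_ne_zero
  intro h
  have h0 := congrArg (fun p => Polynomial.coeff p 0) h
  simp at h0

lemma hzq : z * (1 + v + v ^ 2) = v := div_mul_cancel₀ v hq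

lemma key (k : ℕ) :
    (M (k+1)).det * (1+v+v^2)^(k+1) * (1-v) = (1+v)^k * (1 - v^(k+3)) ∧
    (Bm (k+1)).det * (1+v+v^2)^(k+1) * (1-v) = -v * (1+v)^k * (1 - v^(k+1)) := by
  induction k with
  | zero =>
    have hD : (M 1).det = 1 := by simp [Matrix.det_fin_one, M]
    have hN : (Bm 1).det = -z := by simp [Matrix.det_fin_one, Bm]
    constructor
    · rw [hD]; ring
    · rw [hN]; linear_combination (v - 1) * hzq
  | succ n ih =>
    obtain ⟨ihD, ihN⟩ := ih
    constructor
    · rw [recD n]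
      have expand : ((M (n+1)).det + z * (Bm (n+1)).det) * (1+v+v^2)^(n+2) * (1-v)
          = (1+v+v^2) * ((M (n+1)).det * (1+v+v^2)^(n+1) * (1-v))
            + (z * (1+v+v^2)) * ((Bm (n+1)).det * (1+v+v^2)^(n+1) * (1-v)) := by ring
      rw [expand, ihD, ihN, hzq]; ring
    · rw [recN n]
      have expand : (-z * (M (n+1)).det + z * (Bm (n+1)).det) * (1+v+v^2)^(n+2) * (1-v)
          = -((z * (1+v+v^2)) * ((M (n+1)).det * (1+v+v^2)^(n+1) * (1-v)))
            + (z * (1+v+v^2)) * ((Bm (n+1)).det * (1+v+v^2)^(n+1) * (1-v)) := by ring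
      rw [expand, ihD, ihN, hzq]; ring

theorem stmt4 (m : ℕ) (hm : 1 ≤ m) :
    D m * (1 + v + v ^ 2) ^ m * (1 - v) = (1 + v) ^ (m - 1) * (1 - v ^ (m + 2)) := by
  obtain ⟨k, rfl⟩ : ∃ k, m = k + 1 := ⟨m - 1, by omega⟩
  have h := (key k).1
  simpa [D] using h
end

section
/- Let K = ℚ(v), set z = v/(1+v+v²) in K, and for m ≥ 1 let M_m be the m×m matrix over K with (0-indexed) entries M_{ij} = 1 if i = j, M_{ij} = -z if j = i-1 or j > i, and M_{ij} = 0 if j < i-1. For 0 ≤ t ≤ m-1 and 0 ≤ j ≤ m-1, let D(m;t,j) be the determinant of the matrix obtained from M_m by replacing its j-th column with the standard basis vector e_t (the column with 1 in row t and 0 elsewhere). Then for 0 ≤ j < t ≤ m-1: D(m;t,j) · (1-v)² · (1+v+v²)^{m-1} · (1+v)^{j+3} = (1+v)^{t+m} · (1-v^{j+1}) · v · (1-v^{m-t}). -/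
open Finset

/-- The determinant of `M m` with its `j`-th column replaced by the standard
basis vector `e t`. -/
noncomputable def Dcramer (m : ℕ) (t : ℕ) (j : Fin m) : RatFunc ℚ :=
  ((M m).updateCol j (fun i => if (i : ℕ) = t then 1 else 0)).det

/-! By Cramer's rule, `D(m;t,j) · λ = det M_m · x_j` whenever `M_m x = λ e_t`. Row `i` of
`M_m x` is `(1 + z) x_i - z ∑_{k ≥ i-1} x_k`, so it is convenient to prescribe the tail sums
`F p = ∑_{k ≥ p} x_k` instead of `x`: away from row `t` the equations become the recurrence
`(1 + z) (F i - F (i+1)) = z F (i-1)`, whose solutions are spanned by `(1+v)^{-p}` and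
`(v/(1+v))^p`. For `p ≤ t` we take the combination compatible with the top row, for `p ≥ t`
the one vanishing at `p = m`, glued continuously at `t`; row `t` then yields `λ`.
The same solution also gives `det M_m`: for `t = m - 1` and `j = t`, the Cramer determinant is the
cofactor `det M_{m-1}`, so `det M_m / det M_{m-1}` is an explicit ratio. -/

open Matrix

@[simp]
lemma v_ne_zero : v ≠ 0 := RatFunc.X_ne_zero

@[simp]
lemma one_sub_v_pow_ne_zero {k : ℕ} (hk : k ≠ 0) : 1 - v ^ k ≠ 0 := by
  rw [sub_ne_zero, ne_comm, v, ← RatFunc.algebraMap_X, ← map_pow,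
    ← map_one (algebraMap (Polynomial ℚ) (RatFunc ℚ)),
    (RatFunc.algebraMap_injective ℚ).ne_iff]
  intro h
  simpa [hk] using congrArg Polynomial.natDegree h

@[simp]
lemma one_sub_v_ne_zero : 1 - v ≠ 0 := by simpa using one_sub_v_pow_ne_zero one_ne_zero

@[simp]
lemma one_add_v_ne_zero : 1 + v ≠ 0 := by
  have := one_sub_v_pow_ne_zero two_ne_zero
  contrapose! this
  linear_combination (1 - v) * this

@[simp]
lemma one_add_v_add_sq_ne_zero : 1 + v + v ^ 2 ≠ 0 := by
  have := one_sub_v_pow_ne_zero (k := 3) (by norm_num)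
  contrapose! this
  linear_combination (1 - v) * this

theorem Matrix.cramer_mulVec_self {n α : Type*} [Fintype n] [DecidableEq n] [CommRing α]
    (A : Matrix n n α) (x : n → α) : A.cramer (A *ᵥ x) = A.det • x := by
  rw [cramer_eq_adjugate_mulVec, mulVec_mulVec, adjugate_mul, smul_mulVec, one_mulVec]

lemma M_apply_eq (m : ℕ) (i k : Fin m) :
    M m i k = (if (k : ℕ) = i then 1 + z else 0) - if (i : ℕ) ≤ k + 1 then z else 0 := by
  simp only [M]
  split_ifs <;> first | omega | ring

/-- At `i = 0` the truncated `i - 1` is `0`; the formula still holds because `F 0 - F 1` then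
enters with coefficient `(1 + z) - z = 1`. -/
lemma M_mulVec_sub (m : ℕ) (F : ℕ → RatFunc ℚ) (i : Fin m) :
    (M m *ᵥ fun k => F k - F (k + 1)) i =
      (1 + z) * (F i - F (i + 1)) - z * (F (i - 1) - F m) := by
  have htel : ∑ k ∈ Finset.Ico ((i : ℕ) - 1) m, (F k - F (k + 1)) = F (i - 1) - F m := by
    rw [← neg_sub, ← Finset.sum_Ico_sub F (by omega), ← Finset.sum_neg_distrib]
    simp
  simp only [mulVec, dotProduct, M_apply_eq, sub_mul, ite_mul, zero_mul, Finset.sum_sub_distrib]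
  rw [Fin.sum_univ_eq_sum_range (fun k => if k = (i : ℕ) then (1 + z) * (F k - F (k + 1)) else 0),
    Fin.sum_univ_eq_sum_range (fun k => if (i : ℕ) ≤ k + 1 then z * (F k - F (k + 1)) else 0),
    Finset.sum_ite_eq', if_pos (Finset.mem_range.2 i.isLt), ← Finset.sum_filter,
    ← Finset.mul_sum, ← htel]
  congr 3
  ext k
  simp only [Finset.mem_filter, Finset.mem_range, Finset.mem_Ico]
  omega

noncomputable def solTail (m t p : ℕ) : RatFunc ℚ :=
  (1 - v ^ (min p t + 2)) * (v ^ max p t - v ^ m) / (1 + v) ^ p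

noncomputable def sol (m t k : ℕ) : RatFunc ℚ := solTail m t k - solTail m t (k + 1)

noncomputable def solScale (m t : ℕ) : RatFunc ℚ :=
  (1 - v) * (1 - v ^ (m + 2)) * v ^ t * (1 + v) / ((1 + v + v ^ 2) * (1 + v) ^ t)

lemma solTail_of_le {m t p : ℕ} (h : p ≤ t) :
    solTail m t p = ((v ^ t - v ^ m) + -(v ^ t - v ^ m) * v ^ 2 * v ^ p) / (1 + v) ^ p := by
  rw [solTail, min_eq_left h, max_eq_right h]
  ring

lemma solTail_of_ge {m t p : ℕ} (h : t ≤ p) :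
    solTail m t p = (-(1 - v ^ (t + 2)) * v ^ m + (1 - v ^ (t + 2)) * v ^ p) / (1 + v) ^ p := by
  rw [solTail, min_eq_right h, max_eq_left h]
  ring

lemma solTail_self {m t : ℕ} (h : t ≤ m) : solTail m t m = 0 := by
  simp [solTail, max_eq_left h]

lemma one_add_z_mul_sub_eq_z_mul (a b : RatFunc ℚ) (i : ℕ) :
    (1 + z) * ((a + b * v ^ (i + 1)) / (1 + v) ^ (i + 1) -
      (a + b * v ^ (i + 2)) / (1 + v) ^ (i + 2)) = z * ((a + b * v ^ i) / (1 + v) ^ i) := by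
  simp only [z]
  field_simp
  ring

lemma solTail_recurrence {m t : ℕ} (ht : 1 ≤ t) (i : ℕ) :
    (1 + z) * (solTail m t i - solTail m t (i + 1)) - z * solTail m t (i - 1) =
      if i = t then solScale m t else 0 := by
  rcases i with _ | s
  · rw [if_neg (by omega), solTail_of_le (by omega), solTail_of_le (by omega)]
    simp only [z]
    field_simp
    ring
  rw [Nat.add_sub_cancel]
  obtain hst | rfl | hts := lt_trichotomy (s + 1) t
  · rw [if_neg (by omega), solTail_of_le (by omega), solTail_of_le (by omega),
      solTail_of_le (by omega), sub_eq_zero]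
    exact one_add_z_mul_sub_eq_z_mul _ _ s
  · rw [if_pos rfl, solTail_of_le (p := s) (by omega), solTail_of_le (p := s + 1) le_rfl,
      solTail_of_ge (p := s + 1 + 1) (by omega), solScale]
    simp only [z]
    field_simp
    ring
  · rw [if_neg (by omega), solTail_of_ge (by omega), solTail_of_ge (by omega),
      solTail_of_ge (by omega), sub_eq_zero]
    exact one_add_z_mul_sub_eq_z_mul _ _ s

lemma M_mulVec_sol {m t : ℕ} (ht : 1 ≤ t) (htm : t ≤ m) :
    (M m *ᵥ fun k => sol m t k) =
      solScale m t • fun i : Fin m => if (i : ℕ) = t then (1 : RatFunc ℚ) else 0 := by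
  ext i
  simp only [sol]
  rw [M_mulVec_sub, solTail_self htm, sub_zero, solTail_recurrence ht]
  simp

lemma Dcramer_mul_solScale {m t : ℕ} (ht : 1 ≤ t) (htm : t ≤ m) (j : Fin m) :
    Dcramer m t j * solScale m t = D m * sol m t j := by
  rw [Dcramer, ← cramer_apply, mul_comm, ← smul_eq_mul, ← Pi.smul_apply, ← map_smul,
    ← M_mulVec_sol ht htm, cramer_mulVec_self, D, Pi.smul_apply, smul_eq_mul]

lemma Dcramer_last (n : ℕ) : Dcramer (n + 1) n (Fin.last n) = D n := by
  rw [Dcramer, det_succ_column _ (Fin.last n), Finset.sum_eq_single (Fin.last n)]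
  · have hminor : ((M (n + 1)).updateCol (Fin.last n)
        fun i => if (i : ℕ) = n then 1 else 0).submatrix Fin.castSucc Fin.castSucc = M n := by
      ext i j
      rw [submatrix_apply, updateCol_ne (Fin.castSucc_lt_last j).ne]
      simp [M]
    simp [Fin.succAbove_last, hminor, D]
  · intro i _ hi
    have : (i : ℕ) ≠ n := fun h => hi (Fin.ext h)
    simp [this]
  · simp

lemma D_succ (n : ℕ) :
    D (n + 1) = (1 + v) ^ n * (1 - v ^ (n + 3)) / ((1 - v) * (1 + v + v ^ 2) ^ (n + 1)) := by
  induction n with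
  | zero =>
    rw [D, det_fin_one, show M 1 0 0 = 1 from if_pos rfl]
    field_simp
    ring
  | succ n ih =>
    have key := Dcramer_mul_solScale (m := n + 1 + 1) (t := n + 1) (by omega) (by omega)
      (Fin.last (n + 1))
    rw [Dcramer_last, ih, Fin.val_last, sol, solTail_self (by omega), sub_zero,
      solTail_of_le le_rfl, solScale] at key
    field_simp at key
    rw [eq_div_iff (by simp)]
    refine mul_left_cancel₀ (mul_ne_zero (pow_ne_zero (n + 1) v_ne_zero)
      (one_sub_v_pow_ne_zero (k := n + 3) (by omega))) ?_
    linear_combination -key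

theorem stmt6 (m t j : ℕ) (hjt : j < t) (htm : t ≤ m - 1) :
    Dcramer m t ⟨j, by omega⟩ * (1 - v) ^ 2 * (1 + v + v ^ 2) ^ (m - 1) * (1 + v) ^ (j + 3) =
      (1 + v) ^ (t + m) * (1 - v ^ (j + 1)) * v * (1 - v ^ (m - t)) := by
  obtain ⟨a, rfl⟩ : ∃ a, t = j + 1 + a := ⟨t - j - 1, by omega⟩
  obtain ⟨s, rfl⟩ : ∃ s, m = j + 1 + a + s := ⟨m - (j + 1 + a), by omega⟩
  have key := Dcramer_mul_solScale (m := j + 1 + a + s) (t := j + 1 + a) (by omega) (by omega)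
    ⟨j, by omega⟩
  have hD := D_succ (j + a + s)
  rw [show j + a + s + 1 = j + 1 + a + s by omega] at hD
  rw [sol, solTail_of_le (p := j) (by omega), solTail_of_le (p := j + 1) (by omega), hD,
    solScale] at key
  rw [show j + 1 + a + s - 1 = j + a + s by omega, Nat.add_sub_cancel_left]
  field_simp at key
  refine mul_left_cancel₀ (a := (1 - v ^ (j + 1 + a + s + 2)) * v ^ (j + 1 + a) *
    (1 + v + v ^ 2) * (1 + v) ^ j) (by simp) ?_
  linear_combination (1 + v) * key
end

section
/- Let t ≥ 0. For n ≥ 0 let c_n denote the number of Deutsch paths of length n starting at height t, ending at any nonnegative height, all of whose heights h_i satisfy h_i ≥ 0 (no upper bound). Then in the formal power series ring ℤ[[v]], the series Σ_{n≥0} c_n · vⁿ · ((1+v+v²)⁻¹)ⁿ equals (1+v)^t · (1+v+v²). -/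
/-
Write `w = v (1+v+v²)⁻¹` and let `P_K(t) = Σ_{n<K} c_n(t) wⁿ` be the partial sums.
Splitting off the first step of a path gives `c_{n+1}(t) = c_n(t+1) + Σ_{j<t} c_n(j)`, hence
`P_{K+1}(t) = 1 + w (P_K(t+1) + Σ_{j<t} P_K(j))`. The series `G_t = (1+v)^t (1+v+v²)` satisfy
the same relation exactly, so, as `v ∣ w`, induction on `K` gives `v^K ∣ G_t - P_K(t)` for all
`t`; the coefficient of `v^N` of the series is therefore read off from `P_{N+1}(t)`.
-/

open PowerSeries Finset

/-- Number of Deutsch paths of length `n` starting at height `a`, ending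
anywhere, all of whose heights are nonnegative. -/
noncomputable def pathCountAnyEnd (n : ℕ) (a : ℤ) : ℕ :=
  Nat.card {p : Fin (n + 1) → ℤ //
    p 0 = a ∧ (∀ i, 0 ≤ p i) ∧ IsDeutschPath n p}

abbrev NonnegDeutschPath (n : ℕ) (a : ℤ) : Type :=
  {p : Fin (n + 1) → ℤ // p 0 = a ∧ (∀ i, 0 ≤ p i) ∧ IsDeutschPath n p}

lemma isDeutschPath_cons {n : ℕ} {a : ℤ} {p : Fin (n + 1) → ℤ} :
    IsDeutschPath (n + 1) (Fin.cons a p) ↔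
      (p 0 - a = 1 ∨ p 0 - a ≤ -1) ∧ IsDeutschPath n p := by
  simp [IsDeutschPath, Fin.forall_fin_succ]

instance (a : ℤ) : Subsingleton (NonnegDeutschPath 0 a) :=
  ⟨fun p r => Subtype.ext <| funext fun i => by rw [Fin.eq_zero i, p.2.1, r.2.1]⟩

lemma pathCountAnyEnd_zero {a : ℤ} (ha : 0 ≤ a) : pathCountAnyEnd 0 a = 1 :=
  Nat.card_eq_one_iff_unique.mpr
    ⟨inferInstance, ⟨⟨fun _ => a, rfl, fun _ => ha, fun i => i.elim0⟩⟩⟩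

lemma NonnegDeutschPath.toNat_one_mem {n t : ℕ} (p : NonnegDeutschPath (n + 1) t) :
    (p.1 1).toNat ∈ insert (t + 1) (range t) := by
  have hstep := p.2.2.2 0
  have hnonneg := p.2.2.1 1
  simp only [Fin.succ_zero_eq_one, Fin.castSucc_zero, p.2.1] at hstep
  simp only [mem_insert, mem_range]
  omega

def NonnegDeutschPath.consEquiv (n t : ℕ) :
    NonnegDeutschPath (n + 1) t ≃
      Σ b : (insert (t + 1) (range t) : Finset ℕ), NonnegDeutschPath n b where
  toFun p :=
    ⟨⟨(p.1 1).toNat, p.toNat_one_mem⟩,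
      ⟨Fin.tail p.1, by simpa [Fin.tail] using p.2.2.1 1, fun i => p.2.2.1 i.succ,
        (isDeutschPath_cons.mp (Fin.cons_self_tail p.1 ▸ p.2.2.2)).2⟩⟩
  invFun x :=
    ⟨Fin.cons (t : ℤ) x.2.1, Fin.cons_zero _ _,
      Fin.cases (by simp) fun i => by simpa using x.2.2.2.1 i,
      isDeutschPath_cons.mpr ⟨by
        have hb := (mem_insert.mp x.1.2).imp_right mem_range.mp
        rw [x.2.2.1]; omega, x.2.2.2.2⟩⟩
  left_inv p := Subtype.ext <|
    (congrArg (Fin.cons · (Fin.tail p.1)) p.2.1.symm).trans (Fin.cons_self_tail p.1)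
  right_inv x := Sigma.subtype_ext (Subtype.ext <| by simp [x.2.2.1]) rfl

instance NonnegDeutschPath.finite : ∀ (n : ℕ) (a : ℤ), Finite (NonnegDeutschPath n a)
  | 0, _ => Finite.of_subsingleton
  | n + 1, a => by
    rcases lt_or_ge a 0 with ha | ha
    · have : IsEmpty (NonnegDeutschPath (n + 1) a) :=
        ⟨fun p => by have := p.2.2.1 0; rw [p.2.1] at this; omega⟩
      exact Finite.of_subsingleton
    · lift a to ℕ using ha
      have := NonnegDeutschPath.finite n
      exact Finite.of_equiv _ (NonnegDeutschPath.consEquiv n a).symm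

lemma pathCountAnyEnd_succ (n t : ℕ) :
    pathCountAnyEnd (n + 1) t =
      pathCountAnyEnd n (t + 1) + ∑ j ∈ range t, pathCountAnyEnd n j := by
  rw [pathCountAnyEnd, Nat.card_congr (NonnegDeutschPath.consEquiv n t), Nat.card_sigma,
    sum_coe_sort _ fun b : ℕ => Nat.card (NonnegDeutschPath n b), sum_insert (by simp)]
  rfl

lemma q_mul_invOfUnit : q * invOfUnit q 1 = 1 :=
  mul_invOfUnit q 1 (by simp [q])

lemma X_dvd_w : X ∣ w := dvd_mul_right X _

noncomputable def partialSum (a : ℕ → ℕ) (K : ℕ) : PowerSeries ℤ :=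
  ∑ n ∈ range K, (a n : PowerSeries ℤ) * w ^ n

lemma series_eq_of_forall_X_pow_dvd {a : ℕ → ℕ} {f : PowerSeries ℤ}
    (h : ∀ K, X ^ K ∣ f - partialSum a K) : series a = f := by
  ext N
  have hN := X_pow_dvd_iff.mp (h (N + 1)) N N.lt_succ_self
  rw [map_sub, sub_eq_zero] at hN
  simp only [hN, series, partialSum, coeff_mk, map_sum]
  refine sum_congr rfl fun n _ => ?_
  rw [← map_natCast C, coeff_C_mul]

lemma partialSum_succ (a : ℕ → ℕ) (K : ℕ) :
    partialSum a (K + 1) = a 0 + w * partialSum (fun n => a (n + 1)) K := by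
  simp only [partialSum, sum_range_succ', pow_zero, mul_one, pow_succ', mul_sum]
  rw [add_comm]
  congr 1
  refine sum_congr rfl fun n _ => by ring

lemma one_add_X_pow_mul_q (t : ℕ) :
    (1 + X) ^ t * q = 1 + w * ((1 + X) ^ (t + 1) * q + ∑ j ∈ range t, (1 + X) ^ j * q) := by
  have hu := q_mul_invOfUnit
  have hgeom := geom_sum_mul (1 + X : PowerSeries ℤ) t
  rw [← sum_mul, w]
  generalize invOfUnit q 1 = u at hu ⊢
  unfold q at *
  linear_combination (1 - (1 + X) ^ t * (1 + X + X ^ 2)) * hu - u * (1 + X + X ^ 2) * hgeom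

lemma partialSum_pathCountAnyEnd_succ (t K : ℕ) :
    partialSum (fun n => pathCountAnyEnd n t) (K + 1) =
      1 + w * (partialSum (fun n => pathCountAnyEnd n (t + 1)) K +
        ∑ j ∈ range t, partialSum (fun n => pathCountAnyEnd n j) K) := by
  rw [partialSum_succ]
  simp only [pathCountAnyEnd_zero (Nat.cast_nonneg _), pathCountAnyEnd_succ, partialSum,
    Nat.cast_one, Nat.cast_add, Nat.cast_sum, add_mul, sum_mul, sum_add_distrib]
  rw [sum_comm]

lemma X_pow_dvd_sub_partialSum (K t : ℕ) :
    X ^ K ∣ (1 + X) ^ t * q - partialSum (fun n => pathCountAnyEnd n t) K := by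
  induction K generalizing t with
  | zero => simp
  | succ K ih =>
    rw [one_add_X_pow_mul_q, partialSum_pathCountAnyEnd_succ, pow_succ']
    convert mul_dvd_mul X_dvd_w (dvd_add (ih (t + 1)) (dvd_sum fun j _ => ih j)) using 1
    push_cast
    rw [sum_sub_distrib]
    ring

theorem stmt9 (t : ℕ) :
    (series fun n => pathCountAnyEnd n t) = (1 + X) ^ t * q :=
  series_eq_of_forall_X_pow_dvd fun K => X_pow_dvd_sub_partialSum K t
end

section
/- Let t, j be integers with 0 ≤ t ≤ j. For n ≥ 0 let a_n denote the number of Deutsch paths of length n from height t to height j all of whose heights h_i satisfy h_i ≥ 0 (no upper bound). Then in the formal power series ring ℤ[[v]], the series S = Σ_{n≥0} a_n · vⁿ · ((1+v+v²)⁻¹)ⁿ satisfies S · (1-v) · (1+v)^{j-t+2} = v^{j-t} · (1-v^{t+2}) · (1+v+v²). -/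
/-!
Let `c(n, b)` count the nonnegative Deutsch paths of length `n` from `t` to `b`. Sorting paths by
their last step gives `c(n+1, b) - c(n+1, b+1) = c(n, b-1) - c(n, b) + c(n, b+1)` for `b ≥ 0`.
Substituting `w = v/(1+v+v²)` into `Σₙ c(n, b) zⁿ` turns this into a recurrence in the height for
`G_b = Σₙ c(n, b) wⁿ`, and `E_b = G_b (1-v)(1+v)^(b+2)` satisfies
`E_{b+1} = (1+v) E_b - v E_{b-1} + s_b` with `E_{-1} = 0` and `s_b = 0` unless `b ∈ {t-1, t}`.
The explicit sequence `q (1+v)^t (v^(b-t) - v^(b+2))` (for `b ≥ t`) solves the same recurrence.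
A solution `D` of the homogeneous recurrence with `D_{-1} = 0` has `(1-v) D_b = (1-v^(b+1)) D_0`,
so it vanishes as soon as the `v`-adic order of `D_b` tends to infinity; and `E_b` is divisible by
`v^(b-t)` because a path of length `n` from `t` never rises above `t + n`.
-/

open PowerSeries Finset

abbrev NonnegPath (n : ℕ) (a b : ℤ) : Type :=
  {p : Fin (n + 1) → ℤ // p 0 = a ∧ p (Fin.last n) = b ∧ (∀ i, 0 ≤ p i) ∧ IsDeutschPath n p}

theorem IsDeutschPath.le_add {n : ℕ} {p : Fin (n + 1) → ℤ} (hp : IsDeutschPath n p)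
    (i : Fin (n + 1)) : p i ≤ p 0 + i := by
  induction i using Fin.induction with
  | zero => simp
  | succ i ih =>
    have := hp i
    simp only [Fin.val_succ, Fin.val_castSucc] at ih ⊢
    push_cast
    omega

namespace NonnegPath

variable {n : ℕ} {a b : ℤ}

theorem mem_Icc (x : NonnegPath n a b) (i : Fin (n + 1)) : x.1 i ∈ Icc 0 (a + n) := by
  have := x.2.2.2.2.le_add i
  have := i.is_lt
  exact Finset.mem_Icc.2 ⟨x.2.2.2.1 i, by omega⟩

instance : Finite (NonnegPath n a b) :=
  Finite.of_injective (fun x i => (⟨x.1 i, x.mem_Icc i⟩ : Icc (0 : ℤ) (a + n)))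
    fun _ _ h => Subtype.ext <| funext fun i => congrArg Subtype.val (congrFun h i)

theorem end_mem_Icc (x : NonnegPath n a b) : b ∈ Icc 0 (a + n) := x.2.2.1 ▸ x.mem_Icc _

def init (x : NonnegPath (n + 1) a b) : NonnegPath n a (x.1 (Fin.last n).castSucc) :=
  ⟨Fin.init x.1, x.2.1, rfl, fun _ => x.2.2.2.1 _, fun i => x.2.2.2.2 i.castSucc⟩

def snoc {c : ℤ} (y : NonnegPath n a c) (hb : 0 ≤ b) (hcb : b - c = 1 ∨ b - c ≤ -1) :
    NonnegPath (n + 1) a b := by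
  refine ⟨Fin.snoc y.1 b, by simpa using y.2.1, by simp, Fin.lastCases ?_ ?_, Fin.lastCases ?_ ?_⟩
  · simpa using hb
  · simpa using y.2.2.2.1
  · simpa [Fin.succ_last, y.2.2.1] using hcb
  · intro i
    rw [Fin.succ_castSucc, Fin.snoc_castSucc, Fin.snoc_castSucc]
    exact y.2.2.2.2 i

def snocEquiv (hb : 0 ≤ b) :
    NonnegPath (n + 1) a b ≃
      Σ c : {c ∈ Icc 0 (a + n) | b - c = 1 ∨ b - c ≤ -1}, NonnegPath n a c where
  toFun x := ⟨⟨x.1 (Fin.last n).castSucc, mem_filter.2 ⟨by simpa using (init x).end_mem_Icc, by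
      simpa [x.2.2.1] using x.2.2.2.2 (Fin.last n)⟩⟩, init x⟩
  invFun y := y.2.snoc hb (mem_filter.1 y.1.2).2
  left_inv x := Subtype.ext <| x.2.2.1 ▸ Fin.snoc_init_self x.1
  right_inv y := Sigma.subtype_ext (Subtype.ext <| by simpa [snoc] using y.2.2.2.1)
    (Fin.init_snoc (α := fun _ => ℤ) b y.2.1)

end NonnegPath

theorem pathCount_nonneg_eq_zero {n : ℕ} {a b : ℤ} (hb : b ∉ Icc 0 (a + n)) :
    pathCount n a b (0 ≤ ·) = 0 :=
  have : IsEmpty (NonnegPath n a b) := ⟨fun x => hb x.end_mem_Icc⟩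
  Nat.card_of_isEmpty

theorem pathCount_zero_nonneg {a : ℤ} (ha : 0 ≤ a) (b : ℤ) :
    pathCount 0 a b (0 ≤ ·) = if a = b then 1 else 0 := by
  split_ifs with hab
  · refine Nat.card_eq_one_iff_unique.2 ⟨⟨fun x y => Subtype.ext <| funext fun i => ?_⟩,
      ⟨⟨fun _ => a, rfl, hab, fun _ => ha, finZeroElim⟩⟩⟩
    rw [Fin.fin_one_eq_zero i, x.2.1, y.2.1]
  · have : IsEmpty (NonnegPath 0 a b) := ⟨fun x => hab (x.2.1.symm.trans x.2.2.1)⟩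
    exact Nat.card_of_isEmpty

theorem pathCount_succ_nonneg {n : ℕ} {a b : ℤ} (hb : 0 ≤ b) :
    pathCount (n + 1) a b (0 ≤ ·) =
      ∑ c ∈ Icc 0 (a + n), if b - c = 1 ∨ b - c ≤ -1 then pathCount n a c (0 ≤ ·) else 0 := by
  rw [← sum_filter, ← sum_coe_sort]
  exact (Nat.card_congr (NonnegPath.snocEquiv hb)).trans Nat.card_sigma

theorem sum_ite_eq_pathCount (n : ℕ) (a x : ℤ) :
    ∑ c ∈ Icc 0 (a + n), (if c = x then (pathCount n a c (0 ≤ ·) : ℤ) else 0) =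
      pathCount n a x (0 ≤ ·) := by
  rw [sum_ite_eq']
  split_ifs with hx
  · rfl
  · rw [pathCount_nonneg_eq_zero hx, Nat.cast_zero]

theorem pathCount_succ_sub_pathCount_succ_nonneg {n : ℕ} {a b : ℤ} (hb : 0 ≤ b) :
    (pathCount (n + 1) a b (0 ≤ ·) : ℤ) - pathCount (n + 1) a (b + 1) (0 ≤ ·) =
      pathCount n a (b - 1) (0 ≤ ·) - pathCount n a b (0 ≤ ·) +
        pathCount n a (b + 1) (0 ≤ ·) := by
  rw [pathCount_succ_nonneg hb, pathCount_succ_nonneg (by omega : 0 ≤ b + 1),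
    ← sum_ite_eq_pathCount n a (b - 1), ← sum_ite_eq_pathCount n a b,
    ← sum_ite_eq_pathCount n a (b + 1)]
  push_cast
  simp only [← sum_sub_distrib, ← sum_add_distrib]
  refine sum_congr rfl fun c _ => ?_
  split_ifs <;> omega

noncomputable def pathGF (a b : ℤ) : ℤ⟦X⟧ := mk fun n => (pathCount n a b (0 ≤ ·) : ℤ)

theorem pathGF_sub_pathGF_add_one {a b : ℤ} (ha : 0 ≤ a) (hb : 0 ≤ b) :
    pathGF a b - pathGF a (b + 1) =
      ((if a = b then 1 else 0) - (if a = b + 1 then 1 else 0)) +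
        X * (pathGF a (b - 1) - pathGF a b + pathGF a (b + 1)) := by
  ext (_ | n)
  · simp [pathGF, pathCount_zero_nonneg ha]
  · simp [pathGF, coeff_succ_X_mul, apply_ite (coeff (n + 1)), coeff_one,
      pathCount_succ_sub_pathCount_succ_nonneg hb]

noncomputable def pathSeries (a b : ℤ) : ℤ⟦X⟧ := series fun n => pathCount n a b (0 ≤ ·)

theorem pathSeries_eq_subst (a b : ℤ) : pathSeries a b = (pathGF a b).subst w :=
  series_eq_subst _

theorem q_mul_pathSeries_sub {a b : ℤ} (ha : 0 ≤ a) (hb : 0 ≤ b) :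
    q * (pathSeries a b - pathSeries a (b + 1)) =
      q * ((if a = b then 1 else 0) - (if a = b + 1 then 1 else 0)) +
        X * (pathSeries a (b - 1) - pathSeries a b + pathSeries a (b + 1)) := by
  have := congrArg (substAlgHom (R := ℤ) hasSubst_w) (pathGF_sub_pathGF_add_one ha hb)
  simp only [map_sub, map_add, map_mul, apply_ite (substAlgHom _), map_one, map_zero,
    coe_substAlgHom, subst_X hasSubst_w, ← pathSeries_eq_subst] at this
  rw [this, ← w_mul_q]
  ring

section LinearRecurrence

variable {R : Type*} [CommRing R] {D : ℕ → R⟦X⟧}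

theorem one_sub_X_mul_eq_of_linearRec (h0 : D 0 = 0)
    (h : ∀ k, D (k + 2) = (1 + X) * D (k + 1) - X * D k) (k : ℕ) :
    (1 - X) * D k = (1 - X ^ k) * D 1 := by
  induction k using Nat.twoStepInduction with
  | zero => simp [h0]
  | one => ring
  | more k ih₀ ih₁ => rw [h k]; linear_combination (1 + X) * ih₁ - X * ih₀

theorem eq_zero_of_linearRec (h0 : D 0 = 0)
    (h : ∀ k, D (k + 2) = (1 + X) * D (k + 1) - X * D k)
    (hdvd : ∀ N, ∃ k, N ≤ k ∧ X ^ N ∣ D k) (k : ℕ) : D k = 0 := by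
  have hD1 : D 1 = 0 := by
    ext N
    obtain ⟨k, hk, hXk⟩ := hdvd (N + 1)
    have : X ^ (N + 1) ∣ D 1 := by
      have h1 := dvd_mul_of_dvd_right hXk (1 - X)
      rw [one_sub_X_mul_eq_of_linearRec h0 h, sub_mul, one_mul] at h1
      exact (dvd_sub_left (dvd_mul_of_dvd_left (pow_dvd_pow X hk) (D 1))).1 h1
    simpa using X_pow_dvd_iff.1 this N N.lt_succ_self
  have hunit : IsUnit (1 - X : R⟦X⟧) := isUnit_iff_constantCoeff.2 (by simp)
  simpa [hD1, hunit.mul_right_eq_zero] using one_sub_X_mul_eq_of_linearRec h0 h k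

end LinearRecurrence

theorem X_pow_dvd_pathSeries {a b : ℤ} {N : ℕ} (h : a + N ≤ b) : X ^ N ∣ pathSeries a b :=
  X_pow_dvd_iff.2 fun m hm => by
    rw [pathSeries, series, coeff_mk]
    refine sum_eq_zero fun n hn => ?_
    rw [pathCount_nonneg_eq_zero, Nat.cast_zero, zero_mul]
    simp only [mem_range] at hn
    simp only [Finset.mem_Icc, not_and_or, not_le]
    omega

noncomputable def recurrenceSource (t k : ℕ) : ℤ⟦X⟧ :=
  q * (1 - X) * (1 + X) ^ (k + 1) * ((if t = k + 1 then 1 else 0) - (if t = k then 1 else 0))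

/-- Index `k` stands for height `k - 1`, so that index `0` is the unreachable height `-1`. -/
noncomputable def normalizedPathSeries (t k : ℕ) : ℤ⟦X⟧ :=
  pathSeries t (k - 1) * ((1 - X) * (1 + X) ^ (k + 1))

theorem normalizedPathSeries_zero (t : ℕ) : normalizedPathSeries t 0 = 0 := by
  simp [normalizedPathSeries, pathSeries, series, pathCount_nonneg_eq_zero, PowerSeries.ext_iff]

theorem normalizedPathSeries_add_two (t k : ℕ) :
    normalizedPathSeries t (k + 2) =
      (1 + X) * normalizedPathSeries t (k + 1) - X * normalizedPathSeries t k +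
        recurrenceSource t k := by
  have h := q_mul_pathSeries_sub (Int.natCast_nonneg t) (Int.natCast_nonneg k)
  simp only [← Nat.cast_add_one, Nat.cast_inj] at h
  push_cast at h
  simp only [normalizedPathSeries, recurrenceSource, Nat.cast_add, Nat.cast_ofNat, Nat.cast_one,
    show (k : ℤ) + 2 - 1 = k + 1 by ring, add_sub_cancel_right]
  unfold q at h ⊢
  linear_combination (-(1 - X) * (1 + X) ^ (k + 1)) * h

noncomputable def closedForm (t k : ℕ) : ℤ⟦X⟧ :=
  q * (1 + X) ^ t * (X ^ (if k ≤ t then 1 else k - 1 - t) - X ^ (k + 1))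

theorem closedForm_zero (t : ℕ) : closedForm t 0 = 0 := by
  simp [closedForm]

theorem closedForm_add_two (t k : ℕ) :
    closedForm t (k + 2) =
      (1 + X) * closedForm t (k + 1) - X * closedForm t k + recurrenceSource t k := by
  obtain h | rfl | rfl | h : k + 1 < t ∨ t = k + 1 ∨ t = k ∨ t < k := by omega
  all_goals
    simp (disch := omega) only [closedForm, recurrenceSource, if_pos, if_neg, if_true]
  · ring
  · rw [show k + 2 - 1 - (k + 1) = 0 by omega]
    ring
  · rw [show t + 2 - 1 - t = 1 by omega, show t + 1 - 1 - t = 0 by omega]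
    ring
  · rw [show k + 2 - 1 - t = k - 1 - t + 2 by omega, show k + 1 - 1 - t = k - 1 - t + 1 by omega]
    ring

theorem X_pow_dvd_closedForm {t k N : ℕ} (h : t + N < k) : X ^ N ∣ closedForm t k := by
  rw [closedForm, if_neg (by omega)]
  exact dvd_mul_of_dvd_right (dvd_sub (pow_dvd_pow X (by omega)) (pow_dvd_pow X (by omega))) _

theorem normalizedPathSeries_eq_closedForm (t k : ℕ) :
    normalizedPathSeries t k = closedForm t k := by
  refine sub_eq_zero.1 <| eq_zero_of_linearRec
    (D := fun k => normalizedPathSeries t k - closedForm t k) ?_ (fun k => ?_) (fun N => ?_) k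
  · simp [normalizedPathSeries_zero, closedForm_zero]
  · simp only [normalizedPathSeries_add_two, closedForm_add_two]
    ring
  · refine ⟨t + N + 1, by omega, dvd_sub ?_ (X_pow_dvd_closedForm (by omega))⟩
    exact dvd_mul_of_dvd_left (X_pow_dvd_pathSeries (by push_cast; omega)) _

theorem stmt13 (t j : ℕ) (htj : t ≤ j) :
    (series fun n => pathCount n t j (fun x => 0 ≤ x)) * (1 - X) * (1 + X) ^ (j - t + 2) =
      X ^ (j - t) * (1 - X ^ (t + 2)) * q := by
  change pathSeries t j * _ * _ = _
  obtain ⟨d, rfl⟩ := Nat.exists_eq_add_of_le htj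
  have h := normalizedPathSeries_eq_closedForm t (t + d + 1)
  rw [normalizedPathSeries, closedForm, if_neg (by omega), show t + d + 1 - 1 - t = d by omega,
    Nat.cast_add_one, add_sub_cancel_right] at h
  have hunit : IsUnit ((1 + X : ℤ⟦X⟧) ^ t) := (isUnit_iff_constantCoeff.2 (by simp)).pow t
  refine hunit.mul_left_cancel ?_
  rw [add_tsub_cancel_left]
  linear_combination h
end
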